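/- Let G and H be graphs with identical 1-WL stable colorings, and let V_G ⊆ V(G) and V_H ⊆ V(H) be the sets of vertices whose stable color class has cardinality 1 (in the disjoint union of G and H). Then the induced subgraphs G[V_G] and H[V_H] are isomorphic. -/

import Mathlib

/-! 1-WL color refinement, run on the disjoint union of two graphs. -/

def WLColor (L : Type) : ℕ → Type
  | 0 => L
  | t + 1 => WLColor L t × Multiset (WLColor L t)

def wlColorDecEq (L : Type) [DecidableEq L] : (t : ℕ) → DecidableEq (WLColor L t)
  | 0 => inferInstanceAs (DecidableEq L)
  | t + 1 =>
      letI : DecidableEq (WLColor L t) := wlColorDecEq L t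
      inferInstanceAs (DecidableEq (WLColor L t × Multiset (WLColor L t)))

instance (L : Type) [DecidableEq L] (t : ℕ) : DecidableEq (WLColor L t) := wlColorDecEq L t

def wl {V L : Type} [Fintype V] [DecidableEq V] (G : SimpleGraph V) [DecidableRel G.Adj]
    (ℓ : V → L) : (t : ℕ) → V → WLColor L t
  | 0 => ℓ
  | t + 1 => fun v => (wl G ℓ t v, (G.neighborFinset v).val.map (wl G ℓ t))

/-- The disjoint union `G ⊔ H` of two graphs. -/
def sumGraph {V W : Type} (G : SimpleGraph V) (H : SimpleGraph W) : SimpleGraph (V ⊕ W) where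
  Adj x y :=
    match x, y with
    | .inl u, .inl v => G.Adj u v
    | .inr u, .inr v => H.Adj u v
    | _, _ => False
  symm := by
    constructor
    rintro (u | u) (v | v) h
    · exact G.adj_symm h
    · exact h.elim
    · exact h.elim
    · exact H.adj_symm h
  loopless := by
    constructor
    rintro (u | u) h
    · exact G.irrefl h
    · exact H.irrefl h

instance {V W : Type} (G : SimpleGraph V) (H : SimpleGraph W)
    [DecidableRel G.Adj] [DecidableRel H.Adj] : DecidableRel (sumGraph G H).Adj := fun x y =>
  match x, y with
  | .inl u, .inl v => inferInstanceAs (Decidable (G.Adj u v))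
  | .inl _, .inr _ => inferInstanceAs (Decidable False)
  | .inr _, .inl _ => inferInstanceAs (Decidable False)
  | .inr u, .inr v => inferInstanceAs (Decidable (H.Adj u v))

set_option linter.unusedSectionVars false

section A
variable {U L : Type} [Fintype U] [DecidableEq U] [DecidableEq L]
  (Γ : SimpleGraph U) [DecidableRel Γ.Adj] (ℓ : U → L)

lemma wl_succ (t : ℕ) (v : U) :
    wl Γ ℓ (t + 1) v = (wl Γ ℓ t v, (Γ.neighborFinset v).val.map (wl Γ ℓ t)) := rfl

def WLDet (t : ℕ) : Prop :=
  ∀ x y : U, wl Γ ℓ t x = wl Γ ℓ t y → wl Γ ℓ (t + 1) x = wl Γ ℓ (t + 1) y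

lemma wlDet_succ {t : ℕ} (h : WLDet Γ ℓ t) : WLDet Γ ℓ (t + 1) := by
  have hf : ∃ f : WLColor L t → WLColor L (t + 1),
      ∀ v, wl Γ ℓ (t + 1) v = f (wl Γ ℓ t v) := by
    refine ⟨fun c => if hc : ∃ v, wl Γ ℓ t v = c then wl Γ ℓ (t + 1) hc.choose
      else (c, 0), ?_⟩
    intro v
    dsimp only
    refine Eq.trans ?_ (dif_pos (⟨v, rfl⟩ : ∃ u, wl Γ ℓ t u = wl Γ ℓ t v)).symm
    exact (h _ v (⟨v, rfl⟩ : ∃ u, wl Γ ℓ t u = wl Γ ℓ t v).choose_spec).symm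
  obtain ⟨f, hfv⟩ := hf
  intro x y hxy
  have h2 : (Γ.neighborFinset x).val.map (wl Γ ℓ t)
      = (Γ.neighborFinset y).val.map (wl Γ ℓ t) := congrArg Prod.snd hxy
  rw [wl_succ, wl_succ]
  refine Prod.ext hxy ?_
  calc (Γ.neighborFinset x).val.map (wl Γ ℓ (t + 1))
      = ((Γ.neighborFinset x).val.map (wl Γ ℓ t)).map f := by
        rw [Multiset.map_map]; exact Multiset.map_congr rfl (fun a _ => hfv a)
    _ = ((Γ.neighborFinset y).val.map (wl Γ ℓ t)).map f := by rw [h2]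
    _ = (Γ.neighborFinset y).val.map (wl Γ ℓ (t + 1)) := by
        rw [Multiset.map_map]; exact (Multiset.map_congr rfl (fun a _ => hfv a)).symm

lemma wlDet_add {t : ℕ} (h : WLDet Γ ℓ t) : ∀ s, WLDet Γ ℓ (t + s)
  | 0 => h
  | s + 1 => wlDet_succ Γ ℓ (wlDet_add h s)

lemma wl_image_fst (t : ℕ) :
    (Finset.univ.image (wl Γ ℓ (t + 1))).image Prod.fst = Finset.univ.image (wl Γ ℓ t) := by
  exact Finset.image_image.trans rfl

lemma wlDet_of_card_le (t : ℕ)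
    (hle : (Finset.univ.image (wl Γ ℓ (t + 1))).card ≤ (Finset.univ.image (wl Γ ℓ t)).card) :
    WLDet Γ ℓ t := by
  have h1 : ((Finset.univ.image (wl Γ ℓ (t + 1))).image Prod.fst).card
      = (Finset.univ.image (wl Γ ℓ (t + 1))).card := by
    refine le_antisymm Finset.card_image_le ?_
    rw [wl_image_fst]; exact hle
  have hinj := Finset.injOn_of_card_image_eq h1
  intro x y hxy
  exact hinj (Finset.mem_image_of_mem _ (Finset.mem_univ x))
    (Finset.mem_image_of_mem _ (Finset.mem_univ y)) hxy

lemma wlDet_card : WLDet Γ ℓ (Fintype.card U) := by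
  by_cases hU : Nonempty U
  · by_cases hex : ∃ t < Fintype.card U, WLDet Γ ℓ t
    · obtain ⟨t, ht, hdet⟩ := hex
      have := wlDet_add Γ ℓ hdet (Fintype.card U - t)
      rwa [Nat.add_sub_cancel' ht.le] at this
    · push_neg at hex
      exfalso
      have hstrict : ∀ t, t ≤ Fintype.card U →
          t + 1 ≤ (Finset.univ.image (wl Γ ℓ t)).card := by
        intro t
        induction t with
        | zero =>
          intro _
          simpa using Finset.card_pos.mpr
            (Finset.image_nonempty.mpr (Finset.univ_nonempty (α := U)))
        | succ t ih =>
          intro ht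
          have h1 := ih (le_of_lt ht)
          have h2 : ¬ WLDet Γ ℓ t := hex t ht
          have h3 : (Finset.univ.image (wl Γ ℓ t)).card
              < (Finset.univ.image (wl Γ ℓ (t + 1))).card := by
            by_contra hcon
            exact h2 (wlDet_of_card_le Γ ℓ t (le_of_not_gt hcon))
          omega
      have h4 := hstrict (Fintype.card U) le_rfl
      have h5 : (Finset.univ.image (wl Γ ℓ (Fintype.card U))).card ≤ Fintype.card U := by
        calc _ ≤ (Finset.univ : Finset U).card := Finset.card_image_le
          _ = Fintype.card U := Finset.card_univ
      omega
  · intro x y _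
    exact absurd ⟨x⟩ hU

lemma count_map_card {α β : Type} [DecidableEq β] (s : Finset α) (f : α → β) (b : β) :
    Multiset.count b (s.val.map f) = (s.filter fun a => f a = b).card := by
  rw [Multiset.count_map]
  have : Multiset.filter (fun a => b = f a) s.val = Multiset.filter (fun a => f a = b) s.val :=
    Multiset.filter_congr (fun a _ => by constructor <;> exact Eq.symm
      )
  rw [this]
  rfl

end A


section B
variable {V W : Type} [Fintype V] [DecidableEq V] [Fintype W] [DecidableEq W]
  (G : SimpleGraph V) (H : SimpleGraph W) [DecidableRel G.Adj] [DecidableRel H.Adj]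

lemma sumGraph_adj_inl_inl (u v : V) : (sumGraph G H).Adj (Sum.inl u) (Sum.inl v) ↔ G.Adj u v :=
  Iff.rfl

lemma sumGraph_adj_inr_inr (u v : W) : (sumGraph G H).Adj (Sum.inr u) (Sum.inr v) ↔ H.Adj u v :=
  Iff.rfl

lemma sumGraph_nbr_inl (v : V) : (sumGraph G H).neighborFinset (Sum.inl v)
    = (G.neighborFinset v).map ⟨Sum.inl, Sum.inl_injective⟩ := by
  ext x
  cases x with
  | inl u => simp [SimpleGraph.mem_neighborFinset, sumGraph_adj_inl_inl]
  | inr u =>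
    simp only [SimpleGraph.mem_neighborFinset, Finset.mem_map, Function.Embedding.coeFn_mk]
    constructor
    · intro h; exact h.elim
    · rintro ⟨a, -, h⟩; exact absurd h (by simp)

lemma sumGraph_nbr_inr (w : W) : (sumGraph G H).neighborFinset (Sum.inr w)
    = (H.neighborFinset w).map ⟨Sum.inr, Sum.inr_injective⟩ := by
  ext x
  cases x with
  | inr u => simp [SimpleGraph.mem_neighborFinset, sumGraph_adj_inr_inr]
  | inl u =>
    simp only [SimpleGraph.mem_neighborFinset, Finset.mem_map, Function.Embedding.coeFn_mk]
    constructor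
    · intro h; exact h.elim
    · rintro ⟨a, -, h⟩; exact absurd h (by simp)

end B

/-- Let `G` and `H` have identical 1-WL stable colorings (computed on
the disjoint union `G ⊔ H` at iteration `N = |V(G ⊔ H)|`), and let `V_G ⊆ V(G)` and
`V_H ⊆ V(H)` be the sets of vertices whose stable color is carried by exactly one vertex
of their own graph.  Then the induced subgraphs `G[V_G]` and `H[V_H]` are isomorphic. -/
theorem singleton_color_classes_induce_isomorphic_subgraphs
    {V W L : Type} [Fintype V] [DecidableEq V] [Fintype W] [DecidableEq W] [DecidableEq L]
    (G : SimpleGraph V) (H : SimpleGraph W) [DecidableRel G.Adj] [DecidableRel H.Adj]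
    (ℓG : V → L) (ℓH : W → L)
    (N : ℕ) (hN : N = Fintype.card (V ⊕ W))
    (hsame :
      Finset.univ.val.map (fun v : V => wl (sumGraph G H) (Sum.elim ℓG ℓH) N (Sum.inl v))
        = Finset.univ.val.map
            (fun w : W => wl (sumGraph G H) (Sum.elim ℓG ℓH) N (Sum.inr w))) :
    Nonempty
      ((G.induce {v : V |
          (Finset.univ.filter fun u : V =>
            wl (sumGraph G H) (Sum.elim ℓG ℓH) N (Sum.inl u)
              = wl (sumGraph G H) (Sum.elim ℓG ℓH) N (Sum.inl v)).card = 1})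
        ≃g
       (H.induce {w : W |
          (Finset.univ.filter fun x : W =>
            wl (sumGraph G H) (Sum.elim ℓG ℓH) N (Sum.inr x)
              = wl (sumGraph G H) (Sum.elim ℓG ℓH) N (Sum.inr w)).card = 1})) := by
  classical
  set Γ := sumGraph G H with hΓ
  set ℓ := Sum.elim ℓG ℓH with hℓ
  set c : V ⊕ W → WLColor L N := wl Γ ℓ N with hcdef
  -- stability at step N
  have hdet : ∀ x y : V ⊕ W, c x = c y → wl Γ ℓ (N + 1) x = wl Γ ℓ (N + 1) y := by
    have h := wlDet_card Γ ℓ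
    rw [← hN] at h
    exact h
  -- equal counts of each color among V and W
  have hcount : ∀ a : WLColor L N,
      (Finset.univ.filter fun u : V => c (Sum.inl u) = a).card
        = (Finset.univ.filter fun x : W => c (Sum.inr x) = a).card := by
    intro a
    rw [← count_map_card, ← count_map_card, hsame]
  -- key: for each singleton-class vertex of V there is a unique matching vertex of W
  have key : ∀ v : V,
      (Finset.univ.filter fun u : V => c (Sum.inl u) = c (Sum.inl v)).card = 1 →
      ∃ w : W, c (Sum.inr w) = c (Sum.inl v) ∧
        ∀ x : W, c (Sum.inr x) = c (Sum.inl v) → x = w := by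
    intro v hv
    have h1 : (Finset.univ.filter fun x : W => c (Sum.inr x) = c (Sum.inl v)).card = 1 :=
      (hcount _).symm.trans hv
    obtain ⟨w, hw⟩ := Finset.card_eq_one.mp h1
    refine ⟨w, ?_, ?_⟩
    · have hm : w ∈ Finset.univ.filter fun x : W => c (Sum.inr x) = c (Sum.inl v) := by
        rw [hw]; exact Finset.mem_singleton_self w
      exact (Finset.mem_filter.mp hm).2
    · intro x hx
      have hm : x ∈ Finset.univ.filter fun y : W => c (Sum.inr y) = c (Sum.inl v) :=
        Finset.mem_filter.mpr ⟨Finset.mem_univ x, hx⟩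
      rw [hw] at hm
      exact Finset.mem_singleton.mp hm
  have key' : ∀ w : W,
      (Finset.univ.filter fun x : W => c (Sum.inr x) = c (Sum.inr w)).card = 1 →
      ∃ v : V, c (Sum.inl v) = c (Sum.inr w) ∧
        ∀ u : V, c (Sum.inl u) = c (Sum.inr w) → u = v := by
    intro w hw
    have h1 : (Finset.univ.filter fun u : V => c (Sum.inl u) = c (Sum.inr w)).card = 1 :=
      (hcount _).trans hw
    obtain ⟨v, hv⟩ := Finset.card_eq_one.mp h1
    refine ⟨v, ?_, ?_⟩
    · have hm : v ∈ Finset.univ.filter fun u : V => c (Sum.inl u) = c (Sum.inr w) := by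
        rw [hv]; exact Finset.mem_singleton_self v
      exact (Finset.mem_filter.mp hm).2
    · intro u hu
      have hm : u ∈ Finset.univ.filter fun y : V => c (Sum.inl y) = c (Sum.inr w) :=
        Finset.mem_filter.mpr ⟨Finset.mem_univ u, hu⟩
      rw [hv] at hm
      exact Finset.mem_singleton.mp hm
  choose φ hφ1 hφ2 using key
  choose ψ hψ1 hψ2 using key'
  -- membership of φ v in V_H
  have hmemH : ∀ (v : V) (hv : (Finset.univ.filter
        fun u : V => c (Sum.inl u) = c (Sum.inl v)).card = 1),
      (Finset.univ.filter fun x : W => c (Sum.inr x) = c (Sum.inr (φ v hv))).card = 1 := by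
    intro v hv
    have heq : (Finset.univ.filter fun x : W => c (Sum.inr x) = c (Sum.inr (φ v hv)))
        = {φ v hv} := by
      ext x
      simp only [Finset.mem_filter, Finset.mem_univ, true_and, Finset.mem_singleton,
        hφ1 v hv]
      exact ⟨hφ2 v hv x, fun h => h ▸ hφ1 v hv⟩
    rw [heq, Finset.card_singleton]
  have hmemG : ∀ (w : W) (hw : (Finset.univ.filter
        fun x : W => c (Sum.inr x) = c (Sum.inr w)).card = 1),
      (Finset.univ.filter fun u : V => c (Sum.inl u) = c (Sum.inl (ψ w hw))).card = 1 := by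
    intro w hw
    have heq : (Finset.univ.filter fun u : V => c (Sum.inl u) = c (Sum.inl (ψ w hw)))
        = {ψ w hw} := by
      ext u
      simp only [Finset.mem_filter, Finset.mem_univ, true_and, Finset.mem_singleton,
        hψ1 w hw]
      exact ⟨hψ2 w hw u, fun h => h ▸ hψ1 w hw⟩
    rw [heq, Finset.card_singleton]
  -- uniqueness within V
  have huniqV : ∀ (v' : V) (hv' : (Finset.univ.filter
        fun u : V => c (Sum.inl u) = c (Sum.inl v')).card = 1),
      ∀ u : V, c (Sum.inl u) = c (Sum.inl v') ↔ u = v' := by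
    intro v' hv' u
    obtain ⟨u0, hu0⟩ := Finset.card_eq_one.mp hv'
    have hv'mem : v' ∈ Finset.univ.filter fun u : V => c (Sum.inl u) = c (Sum.inl v') :=
      Finset.mem_filter.mpr ⟨Finset.mem_univ _, rfl⟩
    rw [hu0, Finset.mem_singleton] at hv'mem
    constructor
    · intro h
      have hm : u ∈ Finset.univ.filter fun y : V => c (Sum.inl y) = c (Sum.inl v') :=
        Finset.mem_filter.mpr ⟨Finset.mem_univ _, h⟩
      rw [hu0, Finset.mem_singleton] at hm
      rw [hm, ← hv'mem]
    · rintro rfl; rfl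
  -- the central adjacency transfer
  have hadj : ∀ (v v' : V)
      (hv : (Finset.univ.filter fun u : V => c (Sum.inl u) = c (Sum.inl v)).card = 1)
      (hv' : (Finset.univ.filter fun u : V => c (Sum.inl u) = c (Sum.inl v')).card = 1),
      (G.Adj v v' ↔ H.Adj (φ v hv) (φ v' hv')) := by
    intro v v' hv hv'
    have hstep := hdet (Sum.inl v) (Sum.inr (φ v hv)) (hφ1 v hv).symm
    have hnb : (Γ.neighborFinset (Sum.inl v)).val.map c
        = (Γ.neighborFinset (Sum.inr (φ v hv))).val.map c := congrArg Prod.snd hstep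
    rw [sumGraph_nbr_inl, sumGraph_nbr_inr, Finset.map_val, Finset.map_val,
      Multiset.map_map, Multiset.map_map] at hnb
    have hcl := congrArg (Multiset.count (c (Sum.inl v'))) hnb
    rw [count_map_card, count_map_card] at hcl
    -- left filter
    have hL : ((G.neighborFinset v).filter
        fun u => (c ∘ (⟨Sum.inl, Sum.inl_injective⟩ : V ↪ V ⊕ W)) u = c (Sum.inl v'))
        = (G.neighborFinset v).filter (fun u => u = v') := by
      apply Finset.filter_congr
      intro u _
      simpa using huniqV v' hv' u
    have hR : ((H.neighborFinset (φ v hv)).filter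
        fun x => (c ∘ (⟨Sum.inr, Sum.inr_injective⟩ : W ↪ V ⊕ W)) x = c (Sum.inl v'))
        = (H.neighborFinset (φ v hv)).filter (fun x => x = φ v' hv') := by
      apply Finset.filter_congr
      intro x _
      simp only [Function.comp_apply, Function.Embedding.coeFn_mk, eq_iff_iff]
      exact ⟨fun h => hφ2 v' hv' x h, fun h => h ▸ hφ1 v' hv'⟩
    rw [hL, hR, Finset.filter_eq', Finset.filter_eq'] at hcl
    by_cases hGA : G.Adj v v'
    · have h1 : v' ∈ G.neighborFinset v := (SimpleGraph.mem_neighborFinset _ _ _).mpr hGA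
      rw [if_pos h1] at hcl
      by_cases hHA : H.Adj (φ v hv) (φ v' hv')
      · exact iff_of_true hGA hHA
      · exfalso
        have h2 : φ v' hv' ∉ H.neighborFinset (φ v hv) := by
          rw [SimpleGraph.mem_neighborFinset]; exact hHA
        rw [if_neg h2] at hcl
        simp at hcl
    · have h1 : v' ∉ G.neighborFinset v := by
        rw [SimpleGraph.mem_neighborFinset]; exact hGA
      rw [if_neg h1] at hcl
      by_cases hHA : H.Adj (φ v hv) (φ v' hv')
      · exfalso
        have h2 : φ v' hv' ∈ H.neighborFinset (φ v hv) :=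
          (SimpleGraph.mem_neighborFinset _ _ _).mpr hHA
        rw [if_pos h2] at hcl
        simp at hcl
      · exact iff_of_false hGA hHA
  -- assemble the isomorphism
  refine ⟨⟨⟨fun x => ⟨φ x.1 x.2, hmemH x.1 x.2⟩, fun y => ⟨ψ y.1 y.2, hmemG y.1 y.2⟩,
    ?_, ?_⟩, ?_⟩⟩
  · intro x
    exact Subtype.ext (hψ2 (φ x.1 x.2) (hmemH x.1 x.2) x.1 (hφ1 x.1 x.2).symm).symm
  · intro y
    exact Subtype.ext (hφ2 (ψ y.1 y.2) (hmemG y.1 y.2) y.1 (hψ1 y.1 y.2).symm).symm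
  · intro a b
    show H.Adj (φ a.1 a.2) (φ b.1 b.2) ↔ G.Adj a.1 b.1
    exact (hadj a.1 b.1 a.2 b.2).symm
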